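/- arXiv:2501.09922 — 2 statements merged into one kernel-verified Lean document; each statement's English description precedes it below -/
import Mathlib

section
/- The squared Poincaré distance function z ↦ ℓ_P(z)² = ((1/2)·log((1+|z|)/(1−|z|)))² is subharmonic on the open unit disk Δ ⊂ ℂ. -/
open MeasureTheory Set

open MeasureTheory

/-- A function `u` is subharmonic on `s ⊆ ℂ` if it is upper semicontinuous on `s` and
satisfies the sub-mean-value property on every closed disk contained in `s`. -/
def SubharmonicOn (u : ℂ → ℝ) (s : Set ℂ) : Prop :=
  UpperSemicontinuousOn u s ∧
    ∀ c : ℂ, ∀ r : ℝ, 0 < r → Metric.closedBall c r ⊆ s →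
      u c ≤ (2 * Real.pi)⁻¹ *
        ∫ θ in (0:ℝ)..(2 * Real.pi), u (c + (r : ℂ) * Complex.exp ((θ : ℂ) * Complex.I))

/-- The Poincaré distance from `0` to `z` in the unit disk. -/
noncomputable def lP (z : ℂ) : ℝ :=
  (1 / 2) * Real.log ((1 + ‖z‖) / (1 - ‖z‖))


noncomputable def Gfun (r : ℝ) : ℝ := (1 / 2) * Real.log ((1 + r) / (1 - r))
noncomputable def Ffun (r : ℝ) : ℝ := (Gfun r) ^ 2

lemma hasDerivAt_Gfun {r : ℝ} (h1 : -1 < r) (h2 : r < 1) :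
    HasDerivAt Gfun ((1 - r ^ 2)⁻¹) r := by
  have h1' : (0:ℝ) < 1 + r := by linarith
  have h2' : (0:ℝ) < 1 - r := by linarith
  have heq : Set.EqOn Gfun (fun x => (1/2) * (Real.log (1 + x) - Real.log (1 - x)))
      (Set.Ioo (-1:ℝ) 1) := by
    intro x hx
    simp only [Gfun]
    rw [Real.log_div (by nlinarith [hx.1] : (1:ℝ) + x ≠ 0) (by nlinarith [hx.2] : (1:ℝ) - x ≠ 0)]
  have hD : HasDerivAt (fun x => (1/2) * (Real.log (1 + x) - Real.log (1 - x)))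
      ((1/2) * ((1 + r)⁻¹ - (-(1 - r)⁻¹))) r := by
    have d1 : HasDerivAt (fun x : ℝ => Real.log (1 + x)) ((1 + r)⁻¹) r := by
      have := (Real.hasDerivAt_log (ne_of_gt h1')).comp r
        ((hasDerivAt_id r).const_add 1)
      simpa [Function.comp_def] using this
    have d2 : HasDerivAt (fun x : ℝ => Real.log (1 - x)) (-(1 - r)⁻¹) r := by
      have := (Real.hasDerivAt_log (ne_of_gt h2')).comp r
        ((hasDerivAt_id r).neg.const_add 1)
      simpa [sub_eq_add_neg, Function.comp_def] using this
    simpa using (d1.sub d2).const_mul (1/2 : ℝ)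
  have hG := hD.congr_of_eventuallyEq (heq.eventuallyEq_of_mem
    (isOpen_Ioo.mem_nhds ⟨h1, h2⟩))
  have h3 : (1:ℝ) - r ^ 2 ≠ 0 := by nlinarith
  refine hG.congr_deriv ?_
  field_simp [h1'.ne', h2'.ne']
  ring

lemma Gfun_nonneg {r : ℝ} (h0 : 0 ≤ r) (h2 : r < 1) : 0 ≤ Gfun r := by
  have h2' : (0:ℝ) < 1 - r := by linarith
  have : (1:ℝ) ≤ (1 + r) / (1 - r) := by
    rw [le_div_iff₀ h2']; linarith
  have := Real.log_nonneg this
  simp only [Gfun]; positivity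

lemma Gfun_mono {x y : ℝ} (hx : 0 ≤ x) (hxy : x ≤ y) (hy : y < 1) : Gfun x ≤ Gfun y := by
  have hx1 : (0:ℝ) < 1 - x := by linarith
  have hy1 : (0:ℝ) < 1 - y := by linarith
  have hpos : (0:ℝ) < (1 + x) / (1 - x) := by positivity
  have hle : (1 + x) / (1 - x) ≤ (1 + y) / (1 - y) := by
    rw [div_le_div_iff₀ hx1 hy1]; nlinarith
  have := Real.log_le_log hpos hle
  simp only [Gfun]; linarith

lemma continuousOn_Gfun : ContinuousOn Gfun (Set.Ico (0:ℝ) 1) := by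
  apply ContinuousOn.mul continuousOn_const
  apply ContinuousOn.log
  · exact (continuousOn_const.add continuousOn_id).div
      (continuousOn_const.sub continuousOn_id) (fun x hx => by
        simp only [Set.mem_Ico] at hx; intro h; nlinarith [hx.1, hx.2])
  · intro x hx
    simp only [Set.mem_Ico] at hx
    have : (0:ℝ) < (1 + x) / (1 - x) := by
      apply div_pos <;> nlinarith [hx.1, hx.2]
    exact ne_of_gt this

lemma convexOn_Ffun : ConvexOn ℝ (Set.Ico (0:ℝ) 1) Ffun := by
  have hint : interior (Set.Ico (0:ℝ) 1) = Set.Ioo 0 1 := interior_Ico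
  have hD : ∀ x ∈ Set.Ioo (0:ℝ) 1,
      HasDerivAt Ffun (2 * Gfun x * (1 - x ^ 2)⁻¹) x := by
    intro x hx
    have := (hasDerivAt_Gfun (by linarith [hx.1]) hx.2).pow 2
    show HasDerivAt (Gfun ^ 2) (2 * Gfun x * (1 - x ^ 2)⁻¹) x
    simpa [Ffun, mul_comm, mul_assoc, mul_left_comm] using this
  apply MonotoneOn.convexOn_of_deriv (convex_Ico 0 1)
  · exact (continuousOn_Gfun.pow 2 : ContinuousOn Ffun _)
  · rw [hint]
    exact fun x hx => (hD x hx).differentiableAt.differentiableWithinAt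
  · rw [hint]
    intro x hx y hy hxy
    rw [(hD x hx).deriv, (hD y hy).deriv]
    have hGx := Gfun_nonneg hx.1.le hx.2
    have hGy := Gfun_nonneg (hx.1.le.trans hxy) hy.2
    have hGxy := Gfun_mono hx.1.le hxy hy.2
    have h1x : (0:ℝ) < 1 - x ^ 2 := by nlinarith [hx.1, hx.2]
    have h1y : (0:ℝ) < 1 - y ^ 2 := by nlinarith [hy.1, hy.2, hx.1.trans_le hxy]
    have hinv : (1 - x ^ 2)⁻¹ ≤ (1 - y ^ 2)⁻¹ := by
      apply inv_anti₀ h1y; nlinarith [hx.1, hx.1.trans_le hxy]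
    have : Gfun x * (1 - x ^ 2)⁻¹ ≤ Gfun y * (1 - y ^ 2)⁻¹ :=
      mul_le_mul hGxy hinv (by positivity) hGy
    linarith

lemma Ffun_mono {x y : ℝ} (hx : 0 ≤ x) (hxy : x ≤ y) (hy : y < 1) : Ffun x ≤ Ffun y := by
  simp only [Ffun]
  exact pow_le_pow_left₀ (Gfun_nonneg hx (lt_of_le_of_lt hxy hy)) (Gfun_mono hx hxy hy) 2

lemma convexOn_ball : ConvexOn ℝ (Metric.ball (0:ℂ) 1) (fun z => Ffun (‖z‖)) := by
  refine ⟨convex_ball 0 1, ?_⟩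
  intro z hz w hw a b ha hb hab
  simp only [Metric.mem_ball, dist_zero_right] at hz hw
  have habs : ‖a • z + b • w‖ ≤ a * ‖z‖ + b * ‖w‖ := by
    calc ‖a • z + b • w‖ ≤ ‖a • z‖ + ‖b • w‖ :=
          norm_add_le _ _
      _ = a * ‖z‖ + b * ‖w‖ := by
          simp only [norm_smul, Real.norm_eq_abs,
            abs_of_nonneg ha, abs_of_nonneg hb]
  have hlt : a * ‖z‖ + b * ‖w‖ < 1 := by
    rcases eq_or_lt_of_le ha with h | h
    · have hb1 : b = 1 := by linarith
      have := norm_nonneg w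
      nlinarith
    · have h1 : a * ‖z‖ < a := by nlinarith
      have h2 : b * ‖w‖ ≤ b := by nlinarith [norm_nonneg w]
      linarith
  have hmem : ∀ v : ℂ, ‖v‖ < 1 → ‖v‖ ∈ Set.Ico (0:ℝ) 1 :=
    fun v hv => ⟨norm_nonneg v, hv⟩
  calc Ffun (‖a • z + b • w‖) ≤ Ffun (a * ‖z‖ + b * ‖w‖) :=
        Ffun_mono (norm_nonneg _) habs hlt
    _ ≤ a * Ffun (‖z‖) + b * Ffun (‖w‖) :=
        convexOn_Ffun.2 (hmem z hz) (hmem w hw) ha hb hab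

lemma continuousOn_uball : ContinuousOn (fun z => Ffun (‖z‖)) (Metric.ball (0:ℂ) 1) := by
  apply (continuousOn_Gfun.pow 2 : ContinuousOn Ffun _).comp
    continuous_norm.continuousOn
  intro z hz
  simp only [Metric.mem_ball, dist_zero_right] at hz
  exact ⟨norm_nonneg z, hz⟩

theorem stmt1' : UpperSemicontinuousOn (fun z => Ffun (‖z‖)) (Metric.ball (0:ℂ) 1) ∧
    ∀ c : ℂ, ∀ r : ℝ, 0 < r → Metric.closedBall c r ⊆ Metric.ball (0:ℂ) 1 →
      Ffun (‖c‖) ≤ (2 * Real.pi)⁻¹ *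
        ∫ θ in (0:ℝ)..(2 * Real.pi),
          Ffun (‖c + (r : ℂ) * Complex.exp ((θ : ℂ) * Complex.I)‖) := by
  set u : ℂ → ℝ := fun z => Ffun (‖z‖) with hu
  constructor
  · exact continuousOn_uball.upperSemicontinuousOn
  · intro c r hr hsub
    have hπ : (0:ℝ) < 2 * Real.pi := by positivity
    set μ : Measure ℝ := volume.restrict (Set.Ioc 0 (2 * Real.pi)) with hμdef
    have hμuniv : μ Set.univ = ENNReal.ofReal (2 * Real.pi) := by
      rw [hμdef, Measure.restrict_apply_univ, Real.volume_Ioc, sub_zero]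
    haveI : IsFiniteMeasure μ := ⟨by rw [hμuniv]; exact ENNReal.ofReal_lt_top⟩
    haveI : NeZero μ := ⟨Measure.measure_univ_ne_zero.mp (by
      rw [hμuniv]; simp [ENNReal.ofReal_eq_zero, not_le, hπ, Real.pi_pos])⟩
    set f : ℝ → ℂ := fun θ => c + (r : ℂ) * Complex.exp ((θ : ℂ) * Complex.I) with hf
    have hf_cont : Continuous f := by
      apply continuous_const.add
      exact continuous_const.mul (Complex.continuous_exp.comp
        (Complex.continuous_ofReal.mul continuous_const))
    have hfs : ∀ θ, f θ ∈ Metric.closedBall c r := by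
      intro θ
      rw [Metric.mem_closedBall, dist_eq_norm, hf]
      simp only [add_sub_cancel_left, norm_mul,
        Complex.norm_exp_ofReal_mul_I, Complex.norm_real, Real.norm_eq_abs, mul_one, abs_of_pos hr, le_refl]
    have hfi : Integrable f μ := hf_cont.integrableOn_Ioc
    have hufc : Continuous (u ∘ f) :=
      continuousOn_uball.comp_continuous hf_cont (fun θ => hsub (hfs θ))
    have hgi : Integrable (u ∘ f) μ := hufc.integrableOn_Ioc
    have hconv : ConvexOn ℝ (Metric.closedBall c r) u :=
      convexOn_ball.subset hsub (convex_closedBall c r)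
    have hcont : ContinuousOn u (Metric.closedBall c r) := continuousOn_uball.mono hsub
    have hjen := hconv.map_average_le hcont Metric.isClosed_closedBall
      (ae_of_all μ hfs) hfi hgi
    have hexp : ∫ θ in (0:ℝ)..(2*Real.pi), Complex.exp ((θ:ℂ) * Complex.I) = 0 := by
      have heq : ∀ θ : ℝ, Complex.exp ((θ:ℂ) * Complex.I) = Complex.exp (Complex.I * (θ:ℂ)) :=
        fun θ => by rw [mul_comm]
      simp_rw [heq]
      rw [integral_exp_mul_complex Complex.I_ne_zero]
      have h1 : Complex.I * ((2*Real.pi : ℝ):ℂ) = 2 * (Real.pi:ℂ) * Complex.I := by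
        push_cast; ring
      rw [h1, Complex.exp_two_pi_mul_I]
      simp
    have hgcont : Continuous (fun θ : ℝ => (r:ℂ) * Complex.exp ((θ:ℂ) * Complex.I)) :=
      continuous_const.mul (Complex.continuous_exp.comp
        (Complex.continuous_ofReal.mul continuous_const))
    have havg_f : (⨍ θ, f θ ∂μ) = c := by
      rw [average_eq, measureReal_def, hμuniv, ENNReal.toReal_ofReal hπ.le]
      have h2 : ∫ θ, f θ ∂μ = ∫ θ in (0:ℝ)..(2*Real.pi), f θ :=
        (intervalIntegral.integral_of_le hπ.le).symm
      have h3 : (∫ θ in (0:ℝ)..(2*Real.pi), f θ) = (2*Real.pi) • c := by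
        have : (∫ θ in (0:ℝ)..(2*Real.pi), f θ) =
            (∫ _ in (0:ℝ)..(2*Real.pi), c) +
              ∫ θ in (0:ℝ)..(2*Real.pi), (r:ℂ) * Complex.exp ((θ:ℂ) * Complex.I) := by
          rw [← intervalIntegral.integral_add intervalIntegrable_const
            (hgcont.intervalIntegrable _ _)]
        rw [this, intervalIntegral.integral_const, intervalIntegral.integral_const_mul,
          hexp, mul_zero, add_zero, sub_zero]
      rw [h2, h3, smul_smul, inv_mul_cancel₀ hπ.ne', one_smul]
    have havg_uf : (⨍ θ, u (f θ) ∂μ) = (2 * Real.pi)⁻¹ *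
        ∫ θ in (0:ℝ)..(2*Real.pi), u (f θ) := by
      rw [average_eq, measureReal_def, hμuniv, ENNReal.toReal_ofReal hπ.le, smul_eq_mul,
        intervalIntegral.integral_of_le hπ.le]
    rw [havg_f, havg_uf] at hjen
    exact hjen


/-- the squared Poincaré distance `z ↦ ℓ_P(z)²` is subharmonic on the
open unit disk. -/
theorem stmt1 : SubharmonicOn (fun z => (lP z) ^ 2) (Metric.ball (0 : ℂ) 1) := by
  exact stmt1'
end

section
/- On the punctured polydisk chart, the Poincaré-type volume growth forces pole bounds: for every integer q ≥ 1, if σ₀ is holomorphic on Δ* × Δ^{m−1} and ∫ |σ₀(w,z)|²·|w|^{2(q−1)}·(log|w|)^{2(q−1)} dV_e < ∞ (dV_e the Euclidean volume), then σ₀ extends to a meromorphic function on Δ × Δ^{m−1} with pole order at most q along {w = 0}. -/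
open MeasureTheory Metric

open Real Filter Topology

set_option maxHeartbeats 1000000
set_option synthInstance.maxHeartbeats 400000


lemma circle_avg_le {f : ℂ → ℂ} {c : ℂ} {s t' : ℝ} (hs : 0 < s) (hst : s < t')
    (hf : DifferentiableOn ℂ f (ball c t')) :
    2 * π * ‖f c‖ ≤ ∫ θ in (0:ℝ)..(2*π), ‖f (circleMap c s θ)‖ := by
  have hd : DiffContOnCl ℂ f (ball c s) :=
    ⟨hf.mono (ball_subset_ball hst.le), hf.continuousOn.mono (by
      rw [closure_ball c hs.ne']; exact closedBall_subset_ball hst)⟩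
  have hC := hd.circleIntegral_sub_inv_smul (mem_ball_self hs)
  have h1 : (∮ z in C(c, s), (z - c)⁻¹ • f z)
      = ∫ θ in (0:ℝ)..(2*π), Complex.I • f (circleMap c s θ) := by
    rw [circleIntegral]
    refine intervalIntegral.integral_congr fun θ _ => ?_
    have h0 : circleMap 0 s θ ≠ 0 := circleMap_ne_center hs.ne'
    rw [deriv_circleMap, circleMap_sub_center, smul_smul]
    congr 1
    rw [mul_right_comm, mul_inv_cancel₀ h0, one_mul]
  rw [h1, intervalIntegral.integral_smul] at hC
  have h2 : (∫ θ in (0:ℝ)..(2*π), f (circleMap c s θ)) = ((2*π : ℝ) : ℂ) • f c := by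
    have := congrArg (fun x => Complex.I⁻¹ • x) hC
    simpa [smul_smul, inv_mul_cancel_left₀ Complex.I_ne_zero, mul_comm, mul_assoc,
      mul_left_comm, Complex.I_ne_zero] using this
  have h3 : ‖∫ θ in (0:ℝ)..(2*π), f (circleMap c s θ)‖ = 2 * π * ‖f c‖ := by
    rw [h2, norm_smul, Complex.norm_real, Real.norm_eq_abs, _root_.abs_of_nonneg Real.two_pi_pos.le]
  calc 2 * π * ‖f c‖ = ‖∫ θ in (0:ℝ)..(2*π), f (circleMap c s θ)‖ := h3.symm
    _ ≤ ∫ θ in (0:ℝ)..(2*π), ‖f (circleMap c s θ)‖ :=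
        intervalIntegral.norm_integral_le_integral_norm Real.two_pi_pos.le

lemma submean {f : ℂ → ℂ} {c : ℂ} {t t' : ℝ} (ht : 0 < t) (htt' : t < t')
    (hf : DifferentiableOn ℂ f (ball c t')) :
    ‖f c‖ * (π * t ^ 2) ≤ ∫ x in ball c t, ‖f x‖ := by
  obtain ⟨M, hM⟩ := (isCompact_closedBall c t).exists_bound_of_continuousOn
    (hf.continuousOn.mono (closedBall_subset_ball htt'))
  set g : ℂ → ℝ := (ball (0:ℂ) t).indicator (fun x => ‖f (c + x)‖) with hg
  have polar : ∫ p in polarCoord.target, p.1 • g (Complex.polarCoord.symm p) = ∫ x, g x :=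
    Complex.integral_comp_polarCoord_symm g
  have hpre : (fun x => c + x) ⁻¹' (ball c t) = ball (0:ℂ) t := by
    ext x; simp [mem_ball, dist_eq_norm]
  have hgint : ∫ x, g x = ∫ x in ball c t, ‖f x‖ := by
    rw [hg, integral_indicator measurableSet_ball, ← hpre,
      (measurePreserving_add_left volume c).setIntegral_preimage_emb
        (Homeomorph.measurableEmbedding (Homeomorph.addLeft c)) (fun x => ‖f x‖) (ball c t)]
  set T2 : Set (ℝ × ℝ) := Set.Ioo (0:ℝ) t ×ˢ Set.Ioo (-π) π with hT2
  have hsub : T2 ⊆ polarCoord.target := by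
    rw [polarCoord_target]
    exact Set.prod_mono (Set.Ioo_subset_Ioi_self) le_rfl
  have habs : ∀ p : ℝ × ℝ, ‖(Complex.polarCoord.symm p)‖ = |p.1| :=
    Complex.norm_polarCoord_symm
  have hzero : ∀ p ∈ polarCoord.target \ T2, p.1 • g (Complex.polarCoord.symm p) = 0 := by
    rintro ⟨s, θ⟩ ⟨hpt, hpn⟩
    rw [polarCoord_target] at hpt
    have hs0 : 0 < s := hpt.1
    have hθ : θ ∈ Set.Ioo (-π) π := hpt.2
    have hst : t ≤ s := by
      by_contra hc
      exact hpn ⟨⟨hs0, not_le.mp hc⟩, hθ⟩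
    have : Complex.polarCoord.symm (s, θ) ∉ ball (0:ℂ) t := by
      rw [mem_ball_zero_iff]
      push_neg
      rw [habs]
      simpa [abs_of_pos hs0] using hst
    rw [hg, Set.indicator_of_notMem this, smul_zero]
  have hT2meas : MeasurableSet T2 := measurableSet_Ioo.prod measurableSet_Ioo
  have step : ∫ p in polarCoord.target, p.1 • g (Complex.polarCoord.symm p)
      = ∫ p in T2, p.1 • g (Complex.polarCoord.symm p) :=
    setIntegral_eq_of_subset_of_forall_diff_eq_zero polarCoord.open_target.measurableSet hsub hzero
  -- pointwise formula on T2
  have hmem : ∀ p ∈ T2, Complex.polarCoord.symm p ∈ ball (0:ℂ) t := by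
    rintro ⟨s, θ⟩ hp
    rw [mem_ball_zero_iff, habs]
    simpa [abs_of_pos hp.1.1] using hp.1.2
  have hcirc : ∀ p : ℝ × ℝ, c + Complex.polarCoord.symm p = circleMap c p.1 p.2 := by
    rintro ⟨s, θ⟩
    rw [Complex.polarCoord_symm_apply, circleMap, Complex.exp_mul_I]
    push_cast
    ring
  have hfor : ∀ p ∈ T2, p.1 • g (Complex.polarCoord.symm p) = p.1 * ‖f (circleMap c p.1 p.2)‖ := by
    intro p hp
    rw [hg, Set.indicator_of_mem (hmem p hp), hcirc p, smul_eq_mul]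
  -- integrability on T2
  have hbnd : Bornology.IsBounded T2 := (Metric.isBounded_Ioo 0 t).prod (Metric.isBounded_Ioo (-π) π)
  have hcont : ContinuousOn (fun p : ℝ × ℝ => p.1 * ‖f (circleMap c p.1 p.2)‖) T2 := by
    refine (continuousOn_fst).mul (ContinuousOn.norm ?_)
    refine (hf.continuousOn.mono (ball_subset_ball htt'.le)).comp ?_ ?_
    · refine Continuous.continuousOn ?_
      simp only [circleMap]
      exact continuous_const.add ((Complex.continuous_ofReal.comp continuous_fst).mul
        (Complex.continuous_exp.comp ((Complex.continuous_ofReal.comp continuous_snd).mul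
          continuous_const)))
    · rintro ⟨s, θ⟩ hp
      rw [mem_ball]
      simpa [circleMap, abs_of_pos hp.1.1] using hp.1.2
  have hintT2 : IntegrableOn (fun p : ℝ × ℝ => p.1 • g (Complex.polarCoord.symm p)) T2 := by
    refine ⟨((hcont.aestronglyMeasurable hT2meas)).congr ?_,
      HasFiniteIntegral.restrict_of_bounded (C := t * (max M 0)) hbnd.measure_lt_top ?_⟩
    · filter_upwards [self_mem_ae_restrict hT2meas] with p hp
      exact (hfor p hp).symm
    · filter_upwards [self_mem_ae_restrict hT2meas] with p hp
      rw [hfor p hp]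
      have h1 : circleMap c p.1 p.2 ∈ closedBall c t := by
        rw [mem_closedBall]
        simpa [circleMap, abs_of_pos hp.1.1] using hp.1.2.le
      have := hM _ h1
      rw [Real.norm_eq_abs, abs_mul, abs_of_pos hp.1.1]
      have h2 : |‖f (circleMap c p.1 p.2)‖| ≤ max M 0 := by
        rw [abs_of_nonneg (norm_nonneg _)]
        exact le_max_of_le_left this
      exact mul_le_mul hp.1.2.le h2 (abs_nonneg _) ht.le
  have hprod : (volume : Measure (ℝ × ℝ)) = (volume : Measure ℝ).prod volume :=
    Measure.volume_eq_prod ℝ ℝ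
  have hintT2' : Integrable (fun p : ℝ × ℝ => p.1 • g (Complex.polarCoord.symm p))
      (((volume : Measure ℝ).restrict (Set.Ioo 0 t)).prod
        ((volume : Measure ℝ).restrict (Set.Ioo (-π) π))) := by
    rw [Measure.prod_restrict, ← hprod, ← hT2]
    exact hintT2
  have fub : ∫ p in T2, p.1 • g (Complex.polarCoord.symm p)
      = ∫ s in Set.Ioo (0:ℝ) t, ∫ θ in Set.Ioo (-π) π,
          s • g (Complex.polarCoord.symm (s, θ)) := by
    rw [hT2, hprod]
    exact setIntegral_prod _ (by rw [← hprod]; exact hintT2)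
  have hinner : ∀ s ∈ Set.Ioo (0:ℝ) t,
      2*π*‖f c‖ * s ≤ ∫ θ in Set.Ioo (-π) π, s • g (Complex.polarCoord.symm (s, θ)) := by
    intro s hs
    have h1 : Set.EqOn (fun θ => s • g (Complex.polarCoord.symm (s, θ)))
        (fun θ => s * ‖f (circleMap c s θ)‖) (Set.Ioo (-π) π) :=
      fun θ hθ => hfor (s, θ) ⟨hs, hθ⟩
    rw [setIntegral_congr_fun measurableSet_Ioo h1, integral_const_mul]
    have h2 : ∫ θ in Set.Ioo (-π) π, ‖f (circleMap c s θ)‖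
        = ∫ θ in (0:ℝ)..(2*π), ‖f (circleMap c s θ)‖ := by
      rw [← integral_Ioc_eq_integral_Ioo,
        ← intervalIntegral.integral_of_le (by linarith [pi_pos] : (-π:ℝ) ≤ π)]
      have hper : Function.Periodic (fun θ => ‖f (circleMap c s θ)‖) (2*π) := fun θ => by
        simp [periodic_circleMap c s θ]
      have hpp := hper.intervalIntegral_add_eq (-π) 0
      rw [show -π + 2*π = π by ring, show (0:ℝ)+2*π = 2*π by ring] at hpp
      exact hpp
    rw [h2]
    have h3 := circle_avg_le hs.1 (hs.2.trans htt') hf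
    calc 2*π*‖f c‖ * s ≤ (∫ θ in (0:ℝ)..(2*π), ‖f (circleMap c s θ)‖) * s :=
          mul_le_mul_of_nonneg_right h3 hs.1.le
      _ = s * ∫ θ in (0:ℝ)..(2*π), ‖f (circleMap c s θ)‖ := mul_comm _ _
  have hout_int : Integrable
      (fun s => ∫ θ in Set.Ioo (-π) π, s • g (Complex.polarCoord.symm (s, θ)))
      (volume.restrict (Set.Ioo (0:ℝ) t)) := hintT2'.integral_prod_left
  have hconst_int : IntegrableOn (fun s : ℝ => 2*π*‖f c‖ * s) (Set.Ioo (0:ℝ) t) := by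
    exact ((continuous_const.mul continuous_id).integrableOn_Ioc).mono_set Set.Ioo_subset_Ioc_self
  have houter : 2*π*‖f c‖ * (t^2/2)
      ≤ ∫ s in Set.Ioo (0:ℝ) t, ∫ θ in Set.Ioo (-π) π,
          s • g (Complex.polarCoord.symm (s, θ)) := by
    have hmono := setIntegral_mono_on hconst_int hout_int measurableSet_Ioo hinner
    have hval : ∫ s in Set.Ioo (0:ℝ) t, 2*π*‖f c‖ * s = 2*π*‖f c‖ * (t^2/2) := by
      rw [integral_const_mul, ← integral_Ioc_eq_integral_Ioo,
        ← intervalIntegral.integral_of_le ht.le, integral_id]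
      ring
    linarith [hmono, hval.ge]
  have final := houter.trans (le_of_eq (fub.symm.trans (step.symm.trans (polar.trans hgint))))
  calc ‖f c‖ * (π * t ^ 2) = 2*π*‖f c‖ * (t^2/2) := by ring
    _ ≤ ∫ x in ball c t, ‖f x‖ := final

open Filter Topology in
lemma slice_key {σ : ℂ → ℂ} {m : ℕ}
    (hd : DifferentiableOn ℂ σ (ball (0:ℂ) 1 \ {0}))
    (hint : IntegrableOn (fun w => ‖σ w‖^2 * (‖w‖)^(2*m)
      * (Real.log (‖w‖))^(2*m)) (ball (0:ℂ) 1 \ {0}) volume) :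
    ∃ C : ℝ, ∀ w : ℂ, w ≠ 0 → ‖w‖ < 1/4 →
      ‖w^(m+2) * σ w‖^2 ≤ C * (‖w‖)^2 := by
  set ψ : ℂ → ℝ := fun w => ‖σ w‖^2 * (‖w‖)^(2*m)
      * (Real.log (‖w‖))^(2*m) with hψ
  set I₀ : ℝ := ∫ x in (ball (0:ℂ) 1 \ {0}), ψ x with hI₀
  have hψ0 : ∀ x, 0 ≤ ψ x := fun x =>
    mul_nonneg (by positivity) ((even_two_mul m).pow_nonneg _)
  set L : ℝ := Real.log (8/3) with hLdef
  have hLpos : 0 < L := Real.log_pos (by norm_num)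
  refine ⟨I₀ * 4^(m+1) / (π * L^(2*m)), ?_⟩
  intro w hw0 hw4
  set a : ℝ := ‖w‖ with ha
  have ha0 : 0 < a := by
    rw [ha]; exact norm_pos_iff.mpr hw0
  set t : ℝ := a/2 with hdt
  set t' : ℝ := 0.6 * a with hdt'
  have ht : 0 < t := by positivity
  have htt' : t < t' := by rw [hdt, hdt']; linarith
  have habs : ∀ z : ℂ, ‖z‖ = ‖z‖ := fun z => rfl
  have habs_ub : ∀ x : ℂ, ‖x‖ ≤ a + ‖(x - w)‖ := by
    intro x
    rw [habs x, habs (x - w), ha, habs w]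
    calc ‖x‖ = ‖w + (x - w)‖ := by rw [show w + (x - w) = x by ring]
      _ ≤ ‖w‖ + ‖x - w‖ := norm_add_le _ _
  have habs_lb : ∀ x : ℂ, a - ‖(x - w)‖ ≤ ‖x‖ := by
    intro x
    have : a ≤ ‖x‖ + ‖(x - w)‖ := by
      rw [habs x, habs (x - w), ha, habs w]
      calc ‖w‖ = ‖x - (x - w)‖ := by rw [show x - (x - w) = w by ring]
        _ ≤ ‖x‖ + ‖x - w‖ := norm_sub_le _ _
    linarith
  have hsub' : ball w t' ⊆ ball (0:ℂ) 1 \ {0} := by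
    intro x hx
    rw [mem_ball, Complex.dist_eq] at hx
    constructor
    · rw [mem_ball, Complex.dist_eq, sub_zero]
      have := habs_ub x
      rw [hdt'] at hx
      calc ‖x‖ ≤ a + ‖(x - w)‖ := this
        _ < a + 0.6 * a := by linarith
        _ < 1 := by linarith
    · simp only [Set.mem_singleton_iff]
      intro hx0
      rw [hx0, norm_sub_rev, sub_zero, ← ha] at hx
      linarith
  have hfd : DifferentiableOn ℂ (fun x => σ x ^ 2) (ball w t') := (hd.mono hsub').pow 2
  have hsm := submean ht htt' hfd
  have hnormed : ∫ x in ball w t, ‖σ x ^ 2‖ = ∫ x in ball w t, ‖σ x‖^2 :=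
    setIntegral_congr_fun measurableSet_ball (fun x _ => by rw [norm_pow])
  rw [norm_pow, hnormed] at hsm
  set W : ℝ := t^(2*m) * L^(2*m) with hW
  have hWpos : 0 < W := by positivity
  have hballsub : ball w t ⊆ ball (0:ℂ) 1 \ {0} := (ball_subset_ball htt'.le).trans hsub'
  have hptwise : ∀ x ∈ ball w t, ‖σ x‖^2 ≤ W⁻¹ * ψ x := by
    intro x hx
    rw [mem_ball, Complex.dist_eq] at hx
    have hx1 : t ≤ ‖x‖ := by
      have := habs_lb x
      rw [hdt] at *
      linarith
    have hx0 : 0 < ‖x‖ := lt_of_lt_of_le ht hx1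
    have hx2 : ‖x‖ ≤ 3/8 := by
      have := habs_ub x
      calc ‖x‖ ≤ a + ‖(x - w)‖ := this
        _ ≤ a + t := by linarith
        _ = 1.5 * a := by rw [hdt]; ring
        _ ≤ 3/8 := by linarith
    have hlog : L ≤ - Real.log (‖x‖) := by
      have h1 : Real.log (‖x‖) ≤ Real.log (3/8) :=
        Real.log_le_log hx0 hx2
      have h2 : Real.log (3/8) = - L := by
        rw [hLdef, ← Real.log_inv]
        norm_num
      linarith
    have hwt : W ≤ (‖x‖)^(2*m) * (Real.log (‖x‖))^(2*m) := by
      rw [hW]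
      have e1 : t^(2*m) ≤ (‖x‖)^(2*m) := pow_le_pow_left₀ ht.le hx1 _
      have e2 : L^(2*m) ≤ (Real.log (‖x‖))^(2*m) := by
        have : (Real.log (‖x‖))^(2*m) = (- Real.log (‖x‖))^(2*m) :=
          ((even_two_mul m).neg_pow _).symm
        rw [this]
        exact pow_le_pow_left₀ hLpos.le hlog _
      exact mul_le_mul e1 e2 (by positivity) (by positivity)
    rw [inv_mul_eq_div, le_div_iff₀ hWpos]
    calc ‖σ x‖^2 * W ≤ ‖σ x‖^2 * ((‖x‖)^(2*m) * (Real.log (‖x‖))^(2*m)) :=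
          mul_le_mul_of_nonneg_left hwt (by positivity)
      _ = ψ x := by rw [hψ]; ring
  have hI1 : IntegrableOn (fun x => ‖σ x‖^2) (ball w t) := by
    have hcb : closedBall w t ⊆ ball (0:ℂ) 1 \ {0} :=
      (closedBall_subset_ball htt').trans hsub'
    have : ContinuousOn (fun x => ‖σ x‖^2) (closedBall w t) :=
      ((hd.continuousOn.mono hcb).norm.pow 2)
    exact (this.integrableOn_compact (isCompact_closedBall w t)).mono_set ball_subset_closedBall
  have hI2 : IntegrableOn (fun x => W⁻¹ * ψ x) (ball w t) :=
    (hint.mono_set hballsub).const_mul W⁻¹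
  have hmono2 : ∫ x in ball w t, ‖σ x‖^2 ≤ ∫ x in ball w t, W⁻¹ * ψ x :=
    setIntegral_mono_on hI1 hI2 measurableSet_ball hptwise
  have heq2 : ∫ x in ball w t, W⁻¹ * ψ x = W⁻¹ * ∫ x in ball w t, ψ x := integral_const_mul _ _
  have hIle : ∫ x in ball w t, ψ x ≤ I₀ := by
    rw [hI₀]
    refine setIntegral_mono_set hint ?_ hballsub.eventuallyLE
    exact Filter.Eventually.of_forall (fun x => hψ0 x)
  have h1 : ‖σ w‖^2 * (π * t^2) ≤ W⁻¹ * I₀ := by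
    calc ‖σ w‖^2 * (π * t^2) ≤ ∫ x in ball w t, ‖σ x‖^2 := hsm
      _ ≤ ∫ x in ball w t, W⁻¹ * ψ x := hmono2
      _ = W⁻¹ * ∫ x in ball w t, ψ x := heq2
      _ ≤ W⁻¹ * I₀ := mul_le_mul_of_nonneg_left hIle (by positivity)
  have hI₀0 : 0 ≤ I₀ :=
    setIntegral_nonneg (measurableSet_ball.diff (measurableSet_singleton 0)) fun x _ => hψ0 x
  have hfin1 : ‖σ w‖^2 ≤ W⁻¹ * I₀ / (π * t^2) := by
    rw [le_div_iff₀ (by positivity)]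
    exact h1
  have hnorm : ‖w^(m+2) * σ w‖^2 = a^(2*m+4) * ‖σ w‖^2 := by
    rw [norm_mul, norm_pow, ← ha]
    ring
  rw [hnorm]
  calc a^(2*m+4) * ‖σ w‖^2 ≤ a^(2*m+4) * (W⁻¹ * I₀ / (π * t^2)) :=
        mul_le_mul_of_nonneg_left hfin1 (by positivity)
    _ = I₀ * 4^(m+1) / (π * L^(2*m)) * a^2 := by
        rw [hW, hdt, show (4:ℝ)^(m+1) = 2^(2*m+2) by
          rw [show (4:ℝ) = 2^2 by norm_num, ← pow_mul]; ring_nf]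
        field_simp
        ring_nf
        have h2 : ((1:ℝ)/2)^(m*2) * 2^(m*2) = 1 := by rw [← mul_pow]; norm_num
        linear_combination (-(a^4 * a^(m*2) * I₀ * 4)) * h2

open Filter Topology in
lemma slice_tendsto {σ : ℂ → ℂ} {m : ℕ}
    (hd : DifferentiableOn ℂ σ (ball (0:ℂ) 1 \ {0}))
    (hint : IntegrableOn (fun w => ‖σ w‖^2 * (‖w‖)^(2*m)
      * (Real.log (‖w‖))^(2*m)) (ball (0:ℂ) 1 \ {0}) volume) :
    Tendsto (fun w : ℂ => w^(m+2) * σ w) (𝓝[≠] (0:ℂ)) (𝓝 0) := by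
  obtain ⟨C, hC⟩ := slice_key hd hint
  have hball : ∀ᶠ w in 𝓝[≠] (0:ℂ), ‖w‖ < 1/4 := by
    have h1 : Metric.ball (0:ℂ) (1/4) ∈ 𝓝 (0:ℂ) := ball_mem_nhds _ (by norm_num)
    refine eventually_nhdsWithin_of_eventually_nhds (eventually_of_mem h1 fun w hw => ?_)
    rwa [mem_ball, Complex.dist_eq, sub_zero] at hw
  have h2 : Tendsto (fun w : ℂ => ‖w^(m+2) * σ w‖^2) (𝓝[≠] (0:ℂ)) (𝓝 0) := by
    refine squeeze_zero_norm' (a := fun w : ℂ => C * (‖w‖)^2) ?_ ?_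
    · filter_upwards [hball, self_mem_nhdsWithin] with w hw1 hw2
      rw [Real.norm_eq_abs, abs_of_nonneg (by positivity)]
      exact hC w hw2 hw1
    · have hcont : Continuous (fun w : ℂ => C * (‖w‖)^2) :=
        continuous_const.mul (continuous_norm.pow 2)
      have := hcont.tendsto' 0 0 (by simp)
      exact this.mono_left nhdsWithin_le_nhds
  have h3 : Tendsto (fun w : ℂ => ‖w^(m+2) * σ w‖) (𝓝[≠] (0:ℂ)) (𝓝 0) := by
    have h4 := (Real.continuous_sqrt.tendsto 0).comp h2
    rw [Real.sqrt_zero] at h4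
    refine h4.congr fun w => ?_
    simp only [Function.comp_apply]
    rw [Real.sqrt_sq (norm_nonneg _)]
  exact tendsto_zero_iff_norm_tendsto_zero.mpr h3

open Filter Topology in
lemma cauchy_rep {σ : ℂ → ℂ} {m : ℕ}
    (hd : DifferentiableOn ℂ σ (ball (0:ℂ) 1 \ {0}))
    (htd : Tendsto (fun w : ℂ => w^(m+2) * σ w) (𝓝[≠] (0:ℂ)) (𝓝 0)) :
    ∀ w ∈ ball (0:ℂ) (3/4), w ≠ 0 →
      (∮ ζ in C(0, 3/4), (ζ - w)⁻¹ • (ζ^(m+1) * σ ζ))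
        = (2 * π * Complex.I) • (w^(m+1) * σ w) := by
  set f₁ : ℂ → ℂ := fun ζ => ζ^(m+1) * σ ζ with hf₁
  have hf₁d : DifferentiableOn ℂ f₁ (ball (0:ℂ) 1 \ {0}) :=
    (differentiable_pow (m+1)).differentiableOn.mul hd
  have hzero : f₁ 0 = 0 := by simp [hf₁]
  have ho : (fun ζ => f₁ ζ - f₁ 0) =o[𝓝[≠] (0:ℂ)] fun ζ => (ζ - 0)⁻¹ := by
    rw [Asymptotics.isLittleO_iff]
    intro c hc
    have hev : ∀ᶠ w in 𝓝[≠] (0:ℂ), ‖w^(m+2) * σ w‖ ≤ c := by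
      have := htd.norm
      rw [norm_zero] at this
      exact this.eventually_le_const hc |>.mono fun w hw => hw
    filter_upwards [hev, self_mem_nhdsWithin] with w hw hw0
    rw [hzero, sub_zero, sub_zero]
    have hne : (w : ℂ) ≠ 0 := hw0
    have heq : f₁ w = (w^(m+2) * σ w) * w⁻¹ := by
      rw [hf₁]
      field_simp
      ring
    rw [heq, norm_mul]
    exact mul_le_mul_of_nonneg_right hw (norm_nonneg _)
  set Fd : ℂ → ℂ := Function.update f₁ 0 (limUnder (𝓝[≠] (0:ℂ)) f₁) with hFddef
  have hFd : DifferentiableOn ℂ Fd (ball (0:ℂ) 1) :=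
    Complex.differentiableOn_update_limUnder_of_isLittleO
      (ball_mem_nhds 0 one_pos) hf₁d ho
  intro w hw hw0
  have hdc : DiffContOnCl ℂ Fd (ball (0:ℂ) (3/4)) :=
    ⟨hFd.mono (ball_subset_ball (by norm_num)), hFd.continuousOn.mono (by
      rw [closure_ball (0:ℂ) (by norm_num : (3/4:ℝ) ≠ 0)]
      exact closedBall_subset_ball (by norm_num))⟩
  have hC := hdc.circleIntegral_sub_inv_smul hw
  have hcongr : (∮ ζ in C(0, 3/4), (ζ - w)⁻¹ • Fd ζ)
      = ∮ ζ in C(0, 3/4), (ζ - w)⁻¹ • (ζ^(m+1) * σ ζ) := by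
    refine circleIntegral.integral_congr (by norm_num) fun ζ hζ => ?_
    have hζ0 : ζ ≠ 0 := by
      rw [mem_sphere, Complex.dist_eq, sub_zero] at hζ
      intro h
      rw [h] at hζ
      simp at hζ
      linarith [hζ]
    rw [hFddef, Function.update_of_ne hζ0]
  rw [hcongr] at hC
  rw [hC, hFddef, Function.update_of_ne hw0]

lemma lip_of_bounded {E₀ : Type*} [NormedAddCommGroup E₀] [NormedSpace ℂ E₀]
    {f : E₀ → ℂ} {p₀ : E₀} {ε M : ℝ} (hε : 0 < ε)
    (hdiff : ∀ x ∈ ball p₀ (2*ε), DifferentiableAt ℂ f x)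
    (hM : ∀ x ∈ ball p₀ (2*ε), ‖f x‖ ≤ M) :
    ∀ p ∈ ball p₀ ε, ‖f p - f p₀‖ ≤ ((2*M+1)/ε) * ‖p - p₀‖ := by
  have hp₀ : p₀ ∈ ball p₀ (2*ε) := mem_ball_self (by linarith)
  have hM0 : 0 ≤ M := le_trans (norm_nonneg _) (hM p₀ hp₀)
  intro p hp
  rcases eq_or_ne p p₀ with rfl | hne
  · simp only [sub_self, norm_zero, mul_zero]
    exact le_refl 0
  set d : ℝ := ‖p - p₀‖ with hd
  have hd0 : 0 < d := by
    rw [hd, norm_pos_iff]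
    exact sub_ne_zero.mpr hne
  have hdε : d < ε := by
    rw [hd, ← dist_eq_norm]
    exact mem_ball.mp hp
  set R₁ : ℝ := 2*ε/d with hR₁
  have hR₁0 : 0 < R₁ := by positivity
  set g : ℂ → ℂ := fun t => f (p₀ + t • (p - p₀)) with hg
  have hmap1 : ∀ t : ℂ, t ∈ ball (0:ℂ) R₁ → p₀ + t • (p - p₀) ∈ ball p₀ (2*ε) := by
    intro t ht
    rw [mem_ball] at ht ⊢
    rw [dist_eq_norm, add_sub_cancel_left, norm_smul, ← hd]
    rw [Complex.dist_eq, sub_zero] at ht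
    calc ‖t‖ * d < R₁ * d := by
          have : ‖t‖ < R₁ := ht
          exact mul_lt_mul_of_pos_right this hd0
      _ = 2*ε := by rw [hR₁]; field_simp
  have hgd : DifferentiableOn ℂ g (ball (0:ℂ) R₁) := by
    intro t ht
    refine DifferentiableAt.differentiableWithinAt ?_
    refine (hdiff _ (hmap1 t ht)).comp t ?_
    exact (differentiableAt_id.smul_const (p - p₀)).const_add p₀
  have hmaps : Set.MapsTo g (ball (0:ℂ) R₁) (ball (g 0) (2*M+1)) := by
    intro t ht
    rw [mem_ball, dist_eq_norm]
    have h1 : ‖g t‖ ≤ M := hM _ (hmap1 t ht)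
    have h2 : ‖g 0‖ ≤ M := by
      have : g 0 = f p₀ := by rw [hg]; simp
      rw [this]
      exact hM p₀ hp₀
    calc ‖g t - g 0‖ ≤ ‖g t‖ + ‖g 0‖ := norm_sub_le _ _
      _ ≤ M + M := add_le_add h1 h2
      _ < 2*M+1 := by linarith
  have h1R : (1:ℂ) ∈ ball (0:ℂ) R₁ := by
    rw [mem_ball, Complex.dist_eq, sub_zero]
    have : ‖(1:ℂ)‖ = 1 := by simp
    rw [this, hR₁]
    rw [lt_div_iff₀ hd0]
    linarith
  have key := Complex.dist_le_div_mul_dist_of_mapsTo_ball hgd (hmaps.mono_right ball_subset_closedBall) h1R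
  have hg1 : g 1 = f p := by
    rw [hg]
    simp only [one_smul]
    rw [show p₀ + (p - p₀) = p by abel]
  have hg0 : g 0 = f p₀ := by rw [hg]; simp
  rw [hg1, hg0, Complex.dist_eq, dist_eq_norm, sub_zero] at key
  rw [norm_one, mul_one] at key
  calc ‖f p - f p₀‖ ≤ (2*M+1)/R₁ := key
    _ = ((2*M+1)/(2*ε)) * d := by rw [hR₁]; field_simp
    _ ≤ ((2*M+1)/ε) * d := by
        have h3 : (2*M+1)/(2*ε) ≤ (2*M+1)/ε := by
          apply div_le_div_of_nonneg_left (by linarith) hε (by linarith)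
        exact mul_le_mul_of_nonneg_right h3 hd0.le

set_option maxHeartbeats 1000000 in
set_option synthInstance.maxHeartbeats 400000 in
open Filter Topology in
lemma G_diff {k m : ℕ} {σ₀ : ℂ × (Fin k → ℂ) → ℂ}
    (hσ : DifferentiableOn ℂ σ₀
      {p : ℂ × (Fin k → ℂ) | p.1 ∈ ball (0 : ℂ) 1 \ {0} ∧ p.2 ∈ ball (0 : Fin k → ℂ) 1})
    (p₀ : ℂ × (Fin k → ℂ)) (h1 : p₀.1 ∈ ball (0:ℂ) (3/4))
    (h2 : p₀.2 ∈ ball (0 : Fin k → ℂ) 1) :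
    DifferentiableAt ℂ (fun p : ℂ × (Fin k → ℂ) =>
      ∫ θ in Set.Ioc (0:ℝ) (2*π),
        (circleMap 0 (3/4) θ * Complex.I) •
          ((circleMap 0 (3/4) θ - p.1)⁻¹ •
            ((circleMap 0 (3/4) θ)^(m+1) * σ₀ (circleMap 0 (3/4) θ, p.2)))) p₀ := by
  set S : Set (ℂ × (Fin k → ℂ)) :=
    {p | p.1 ∈ ball (0 : ℂ) 1 \ {0} ∧ p.2 ∈ ball (0 : Fin k → ℂ) 1} with hS
  set 𝔥 : ℂ × (ℂ × (Fin k → ℂ)) → ℂ := fun x =>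
    (x.1 * Complex.I) • ((x.1 - x.2.1)⁻¹ • (x.1^(m+1) * σ₀ (x.1, x.2.2))) with h𝔥def
  set Ω : Set (ℂ × (ℂ × (Fin k → ℂ))) :=
    {x | (x.1 ∈ ball (0:ℂ) 1 \ {0}) ∧ x.2.1 ≠ x.1 ∧ x.2.2 ∈ ball (0 : Fin k → ℂ) 1} with hΩ
  have hΩopen : IsOpen Ω := by
    rw [hΩ]
    refine IsOpen.inter ?_ (IsOpen.inter ?_ ?_)
    · exact (isOpen_ball.sdiff isClosed_singleton).preimage continuous_fst
    · exact isOpen_ne_fun (continuous_fst.comp continuous_snd) continuous_fst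
    · exact isOpen_ball.preimage (continuous_snd.comp continuous_snd)
  have hSopen : IsOpen S := by
    rw [hS]
    exact ((isOpen_ball.sdiff isClosed_singleton).preimage continuous_fst).inter
      (isOpen_ball.preimage continuous_snd)
  have h𝔥d : DifferentiableOn ℂ 𝔥 Ω := by
    rw [h𝔥def]
    have hd1 : DifferentiableOn ℂ (fun x : ℂ × (ℂ × (Fin k → ℂ)) => x.1 * Complex.I) Ω :=
      (differentiable_fst.mul_const _).differentiableOn
    have hd2 : DifferentiableOn ℂ (fun x : ℂ × (ℂ × (Fin k → ℂ)) => (x.1 - x.2.1)⁻¹) Ω := by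
      refine DifferentiableOn.inv ?_ ?_
      · exact (differentiable_fst.sub (differentiable_fst.comp differentiable_snd)).differentiableOn
      · rintro x ⟨_, hne, _⟩
        exact sub_ne_zero.mpr (Ne.symm hne)
    have hd3 : DifferentiableOn ℂ
        (fun x : ℂ × (ℂ × (Fin k → ℂ)) => x.1^(m+1) * σ₀ (x.1, x.2.2)) Ω := by
      refine DifferentiableOn.mul ((differentiable_fst.pow _).differentiableOn) ?_
      refine hσ.comp ?_ ?_
      · exact (differentiable_fst.prodMk (differentiable_snd.comp differentiable_snd)).differentiableOn
      · rintro x ⟨hx1, _, hx2⟩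
        exact ⟨hx1, hx2⟩
    exact (hd1.smul (hd2.smul hd3) :)
  have hp₀1 : ‖p₀.1‖ < 3/4 := by
    rw [mem_ball, Complex.dist_eq, sub_zero] at h1; exact h1
  have hp₀2 : ‖p₀.2‖ < 1 := by rwa [mem_ball, dist_zero_right] at h2
  obtain ⟨ε, hεpos, hε1, hε2⟩ : ∃ ε : ℝ, 0 < ε ∧ ‖p₀.1‖ + 4*ε ≤ 3/4 ∧ ‖p₀.2‖ + 4*ε ≤ 1 := by
    refine ⟨min ((3/4 - ‖p₀.1‖)/4) ((1 - ‖p₀.2‖)/4), lt_min (by linarith) (by linarith), ?_, ?_⟩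
    · have := min_le_left ((3/4 - ‖p₀.1‖)/4) ((1 - ‖p₀.2‖)/4)
      linarith
    · have := min_le_right ((3/4 - ‖p₀.1‖)/4) ((1 - ‖p₀.2‖)/4)
      linarith
  have habs1 : ∀ p ∈ ball p₀ (2*ε), ‖p.1‖ < 3/4 - 2*ε := by
    intro p hp
    rw [mem_ball, dist_eq_norm] at hp
    have e1 : ‖p.1 - p₀.1‖ ≤ ‖p - p₀‖ := by simpa using norm_fst_le (p - p₀)
    have e3 : ‖p.1‖ ≤ ‖p₀.1‖ + ‖p.1 - p₀.1‖ := by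
      calc ‖p.1‖ = ‖p₀.1 + (p.1 - p₀.1)‖ := by rw [show p₀.1 + (p.1 - p₀.1) = p.1 by ring]
        _ ≤ ‖p₀.1‖ + ‖p.1 - p₀.1‖ := norm_add_le _ _
    linarith [lt_of_le_of_lt e1 hp]
  have hsnd : ∀ p ∈ ball p₀ (2*ε), ‖p.2 - p₀.2‖ < 2*ε ∧ ‖p.2‖ < 1 := by
    intro p hp
    rw [mem_ball, dist_eq_norm] at hp
    have e2 : ‖p.2 - p₀.2‖ ≤ ‖p - p₀‖ := by simpa using norm_snd_le (p - p₀)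
    have e4 : ‖p.2‖ ≤ ‖p₀.2‖ + ‖p.2 - p₀.2‖ := by
      calc ‖p.2‖ = ‖p₀.2 + (p.2 - p₀.2)‖ := by rw [show p₀.2 + (p.2 - p₀.2) = p.2 by abel]
        _ ≤ ‖p₀.2‖ + ‖p.2 - p₀.2‖ := norm_add_le _ _
    constructor
    · linarith [lt_of_le_of_lt e2 hp]
    · linarith [lt_of_le_of_lt e2 hp]
  have hcabs : ∀ θ : ℝ, ‖(circleMap 0 (3/4) θ)‖ = 3/4 := by
    intro θ; rw [norm_circleMap_zero]; norm_num
  have hdenom : ∀ (θ : ℝ), ∀ p ∈ ball p₀ (2*ε),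
      2*ε ≤ ‖(circleMap 0 (3/4) θ - p.1)‖ := by
    intro θ p hp
    have e5 : ‖(circleMap 0 (3/4) θ)‖
        ≤ ‖(circleMap 0 (3/4) θ - p.1)‖ + ‖p.1‖ := by
      calc ‖circleMap 0 (3/4) θ‖ = ‖(circleMap 0 (3/4) θ - p.1) + p.1‖ := by
            rw [show circleMap 0 (3/4) θ - p.1 + p.1 = circleMap 0 (3/4) θ by ring]
        _ ≤ ‖circleMap 0 (3/4) θ - p.1‖ + ‖p.1‖ := norm_add_le _ _
    have := habs1 p hp
    rw [hcabs θ] at e5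
    linarith
  have hmem : ∀ (θ : ℝ), ∀ p ∈ ball p₀ (2*ε), (circleMap 0 (3/4) θ, p) ∈ Ω := by
    intro θ p hp
    refine ⟨⟨?_, ?_⟩, ?_, ?_⟩
    · rw [mem_ball, Complex.dist_eq, sub_zero, hcabs θ]; norm_num
    · simp only [Set.mem_singleton_iff]
      intro h
      have := hcabs θ
      rw [h, norm_zero] at this
      norm_num at this
    · intro h
      have h5 := hdenom θ p hp
      have h' : p.1 = circleMap 0 (3/4) θ := h
      rw [h', sub_self, norm_zero] at h5
      linarith
    · rw [mem_ball, dist_zero_right]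
      exact (hsnd p hp).2
  have hdiffΦ : ∀ (θ : ℝ), ∀ p ∈ ball p₀ (2*ε),
      DifferentiableAt ℂ (fun p' : ℂ × (Fin k → ℂ) => 𝔥 (circleMap 0 (3/4) θ, p')) p := by
    intro θ p hp
    have hin : DifferentiableAt ℂ 𝔥 (circleMap 0 (3/4) θ, p) :=
      h𝔥d.differentiableAt (hΩopen.mem_nhds (hmem θ p hp))
    exact hin.comp p ((differentiableAt_const _).prodMk differentiableAt_id)
  -- uniform bound
  have hKsub : (sphere (0:ℂ) (3/4)) ×ˢ (closedBall p₀.2 (2*ε)) ⊆ S := by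
    rintro ⟨x1, x2⟩ ⟨hx1, hx2⟩
    rw [mem_sphere, Complex.dist_eq, sub_zero] at hx1
    rw [mem_closedBall, dist_eq_norm] at hx2
    constructor
    · constructor
      · rw [mem_ball, Complex.dist_eq, sub_zero, hx1]; norm_num
      · simp only [Set.mem_singleton_iff]
        intro h
        rw [h, norm_zero] at hx1
        norm_num at hx1
    · rw [mem_ball, dist_zero_right]
      have : ‖x2‖ ≤ ‖p₀.2‖ + ‖x2 - p₀.2‖ := by
        calc ‖x2‖ = ‖p₀.2 + (x2 - p₀.2)‖ := by rw [show p₀.2 + (x2 - p₀.2) = x2 by abel]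
          _ ≤ ‖p₀.2‖ + ‖x2 - p₀.2‖ := norm_add_le _ _
      linarith
  obtain ⟨Mσ₀, hMσ₀⟩ := ((isCompact_sphere (0:ℂ) (3/4)).prod
      (isCompact_closedBall p₀.2 (2*ε))).exists_bound_of_continuousOn
    (hσ.continuousOn.mono hKsub)
  set M : ℝ := (3/4) * ((2*ε)⁻¹ * ((3/4)^(m+1) * max Mσ₀ 0)) with hM
  have hMΦ : ∀ (θ : ℝ), ∀ p ∈ ball p₀ (2*ε), ‖𝔥 (circleMap 0 (3/4) θ, p)‖ ≤ M := by
    intro θ p hp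
    rw [h𝔥def]
    simp only [smul_eq_mul]
    rw [norm_mul, norm_mul, norm_mul, norm_mul]
    rw [hM]
    have n1 : ‖circleMap 0 (3/4) θ‖ = 3/4 := by rw [hcabs θ]
    have n2 : ‖Complex.I‖ = 1 := by simp
    have n3 : ‖(circleMap 0 (3/4) θ - p.1)⁻¹‖ ≤ (2*ε)⁻¹ := by
      rw [norm_inv]
      exact inv_anti₀ (by linarith) (hdenom θ p hp)
    have n4 : ‖(circleMap 0 (3/4) θ)^(m+1)‖ ≤ (3/4)^(m+1) := by
      rw [norm_pow, n1]
    have n5 : ‖σ₀ (circleMap 0 (3/4) θ, p.2)‖ ≤ max Mσ₀ 0 := by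
      refine le_max_of_le_left (hMσ₀ _ ⟨?_, ?_⟩)
      · rw [mem_sphere, Complex.dist_eq, sub_zero, hcabs θ]
      · rw [mem_closedBall, dist_eq_norm]
        exact (hsnd p hp).1.le
    calc ‖circleMap 0 (3/4) θ‖ * ‖Complex.I‖ *
          (‖(circleMap 0 (3/4) θ - p.1)⁻¹‖ * (‖(circleMap 0 (3/4) θ)^(m+1)‖ * ‖σ₀ (circleMap 0 (3/4) θ, p.2)‖))
        ≤ (3/4) * 1 * ((2*ε)⁻¹ * ((3/4)^(m+1) * max Mσ₀ 0)) := by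
          rw [n1, n2]
          refine mul_le_mul_of_nonneg_left ?_ (by norm_num)
          refine mul_le_mul n3 ?_ (by positivity) (by positivity)
          exact mul_le_mul n4 n5 (norm_nonneg _) (by positivity)
      _ = (3/4) * ((2*ε)⁻¹ * ((3/4)^(m+1) * max Mσ₀ 0)) := by ring
  set J : (ℂ × (Fin k → ℂ)) →L[ℂ] ℂ × (ℂ × (Fin k → ℂ)) :=
    (0 : (ℂ × (Fin k → ℂ)) →L[ℂ] ℂ).prod (ContinuousLinearMap.id ℂ (ℂ × (Fin k → ℂ))) with hJ
  set F' : ℝ → (ℂ × (Fin k → ℂ)) →L[ℂ] ℂ :=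
    fun θ => (fderiv ℂ 𝔥 (circleMap 0 (3/4) θ, p₀)).comp J with hF'
  have hp₀mem : p₀ ∈ ball p₀ (2*ε) := mem_ball_self (by linarith)
  have hcont : ∀ p ∈ ball p₀ (2*ε), Continuous (fun θ : ℝ => 𝔥 (circleMap 0 (3/4) θ, p)) := by
    intro p hp
    rw [continuous_iff_continuousAt]
    intro θ
    have hc : ContinuousAt 𝔥 (circleMap 0 (3/4) θ, p) :=
      (h𝔥d.differentiableAt (hΩopen.mem_nhds (hmem θ p hp))).continuousAt
    exact ContinuousAt.comp (f := fun θ : ℝ => ((circleMap 0 (3/4) θ : ℂ), p)) hc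
      (Continuous.continuousAt ((continuous_circleMap 0 (3/4)).prodMk continuous_const))
  have hderiv : ∀ (θ : ℝ), HasFDerivAt (fun p' : ℂ × (Fin k → ℂ) =>
      𝔥 (circleMap 0 (3/4) θ, p')) (F' θ) p₀ := by
    intro θ
    have hin : DifferentiableAt ℂ 𝔥 (circleMap 0 (3/4) θ, p₀) :=
      h𝔥d.differentiableAt (hΩopen.mem_nhds (hmem θ p₀ hp₀mem))
    have hj : HasFDerivAt (fun p' : ℂ × (Fin k → ℂ) => ((circleMap 0 (3/4) θ : ℂ), p')) J p₀ :=
      (hasFDerivAt_const _ _).prodMk (hasFDerivAt_id _)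
    exact hin.hasFDerivAt.comp p₀ hj
  have hmain := hasFDerivAt_integral_of_dominated_loc_of_lip'
    (μ := volume.restrict (Set.Ioc (0:ℝ) (2*π)))
    (F := fun (p : ℂ × (Fin k → ℂ)) (θ : ℝ) => 𝔥 (circleMap 0 (3/4) θ, p)) (F' := F')
    (x₀ := p₀) (bound := fun _ => (2*M+1)/ε) (ball_mem_nhds p₀ hεpos) ?_ ?_ ?_ ?_ ?_ ?_
  · exact hmain.2.differentiableAt
  · intro p hp
    exact ((hcont p (ball_subset_ball (by linarith) hp)).aestronglyMeasurable)
  · exact (hcont p₀ hp₀mem).integrableOn_Ioc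
  · have hm1 : Measurable (fun θ : ℝ => fderiv ℂ 𝔥 (circleMap 0 (3/4) θ, p₀)) :=
      (measurable_fderiv ℂ 𝔥).comp
        (((continuous_circleMap 0 (3/4)).prodMk continuous_const).measurable)
    have hm2 : Continuous (fun L : (ℂ × (ℂ × (Fin k → ℂ))) →L[ℂ] ℂ => L.comp J) :=
      ((ContinuousLinearMap.compL ℂ (ℂ × (Fin k → ℂ)) (ℂ × (ℂ × (Fin k → ℂ))) ℂ).flip J).continuous
    exact ((hm2.measurable.comp hm1).aestronglyMeasurable)
  · refine Filter.Eventually.of_forall fun θ => ?_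
    intro p hp
    have hlip := lip_of_bounded hεpos (hdiffΦ θ) (hMΦ θ) p hp
    exact hlip
  · exact ((integrableOn_const_iff).mpr (Or.inr measure_Ioc_lt_top))
  · exact Filter.Eventually.of_forall hderiv

/-- on a punctured polydisk chart `Δ* × Δ^{m-1}` (here `k = m - 1`), if
`σ₀` is holomorphic and `∫ |σ₀(w,z)|²·|w|^{2(q-1)}·(log|w|)^{2(q-1)} dV_e < ∞` for some
integer `q ≥ 1`, then `σ₀` is meromorphic across `{w = 0}` with pole order at most `q`:
i.e. `w^q·σ₀` extends holomorphically to the full polydisk `Δ × Δ^{m-1}`. -/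
theorem stmt16 (k : ℕ) (q : ℕ) (hq : 1 ≤ q)
    (σ₀ : ℂ × (Fin k → ℂ) → ℂ)
    (hσ : DifferentiableOn ℂ σ₀
      {p : ℂ × (Fin k → ℂ) | p.1 ∈ ball (0 : ℂ) 1 \ {0} ∧ p.2 ∈ ball (0 : Fin k → ℂ) 1})
    (hL2 : IntegrableOn
      (fun p : ℂ × (Fin k → ℂ) =>
        ‖σ₀ p‖ ^ 2 * (‖p.1‖) ^ (2 * (q - 1))
          * (Real.log (‖p.1‖)) ^ (2 * (q - 1)))
      {p : ℂ × (Fin k → ℂ) | p.1 ∈ ball (0 : ℂ) 1 \ {0} ∧ p.2 ∈ ball (0 : Fin k → ℂ) 1}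
      volume) :
    ∃ σt : ℂ × (Fin k → ℂ) → ℂ,
      DifferentiableOn ℂ σt
        {p : ℂ × (Fin k → ℂ) | p.1 ∈ ball (0 : ℂ) 1 ∧ p.2 ∈ ball (0 : Fin k → ℂ) 1} ∧
      ∀ p : ℂ × (Fin k → ℂ),
        p.1 ∈ ball (0 : ℂ) 1 \ {0} → p.2 ∈ ball (0 : Fin k → ℂ) 1 →
        σt p = p.1 ^ q * σ₀ p := by
  obtain ⟨m, rfl⟩ : ∃ m, q = m + 1 := ⟨q - 1, (Nat.succ_pred_eq_of_pos hq).symm⟩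
  simp only [Nat.add_sub_cancel] at hL2
  set S : Set (ℂ × (Fin k → ℂ)) :=
    {p | p.1 ∈ ball (0 : ℂ) 1 \ {0} ∧ p.2 ∈ ball (0 : Fin k → ℂ) 1} with hS
  have hSopen : IsOpen S :=
    ((isOpen_ball.sdiff isClosed_singleton).preimage continuous_fst).inter
      (isOpen_ball.preimage continuous_snd)
  set B : Set (Fin k → ℂ) := ball (0 : Fin k → ℂ) 1 with hB
  set A : Set ℂ := ball (0:ℂ) 1 \ {0} with hA
  set G : (ℂ × (Fin k → ℂ)) → ℂ := fun p =>
    (2*(π:ℝ)*Complex.I : ℂ)⁻¹ • ∫ θ in Set.Ioc (0:ℝ) (2*π),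
      (circleMap 0 (3/4) θ * Complex.I) •
        ((circleMap 0 (3/4) θ - p.1)⁻¹ •
          ((circleMap 0 (3/4) θ)^(m+1) * σ₀ (circleMap 0 (3/4) θ, p.2))) with hG
  have h2πI : (2*(π:ℝ)*Complex.I : ℂ) ≠ 0 :=
    mul_ne_zero (mul_ne_zero two_ne_zero (Complex.ofReal_ne_zero.mpr Real.pi_ne_zero))
      Complex.I_ne_zero
  have hGdiffAt : ∀ p : ℂ × (Fin k → ℂ), p.1 ∈ ball (0:ℂ) (3/4) → p.2 ∈ B →
      DifferentiableAt ℂ G p := by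
    intro p h1 h2
    exact (G_diff (m := m) hσ p h1 h2).const_smul ((2*(π:ℝ)*Complex.I : ℂ)⁻¹)
  have hcirc_eq : ∀ (w : ℂ) (z : Fin k → ℂ),
      (∮ ζ in C(0, 3/4), (ζ - w)⁻¹ • (ζ^(m+1) * σ₀ (ζ, z)))
      = ∫ θ in Set.Ioc (0:ℝ) (2*π), (circleMap 0 (3/4) θ * Complex.I) •
          ((circleMap 0 (3/4) θ - w)⁻¹ •
            ((circleMap 0 (3/4) θ)^(m+1) * σ₀ (circleMap 0 (3/4) θ, z))) := by
    intro w z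
    rw [circleIntegral]
    simp only [deriv_circleMap]
    rw [intervalIntegral.integral_of_le Real.two_pi_pos.le]
  have hzdiff : ∀ z ∈ B, DifferentiableOn ℂ (fun w => σ₀ (w, z)) A := by
    intro z hz
    refine hσ.comp ?_ ?_
    · exact (differentiable_id.prodMk (differentiable_const z)).differentiableOn
    · intro w hw
      exact ⟨hw, hz⟩
  -- a.e. slice integrability
  have haeInt : ∀ᵐ z ∂(volume.restrict B), IntegrableOn
      (fun w => ‖σ₀ (w, z)‖^2 * (‖w‖)^(2*m)
        * (Real.log (‖w‖))^(2*m)) A volume := by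
    have hprodset : S = A ×ˢ B := rfl
    rw [hprodset] at hL2
    have h' : Integrable (fun p : ℂ × (Fin k → ℂ) =>
        ‖σ₀ p‖ ^ 2 * (‖p.1‖) ^ (2 * m) * (Real.log (‖p.1‖)) ^ (2 * m))
        ((volume.restrict A).prod (volume.restrict B)) := by
      rw [Measure.prod_restrict, ← Measure.volume_eq_prod]
      exact hL2
    exact h'.prod_left_ae
  -- the identity G = w^(m+1)σ₀ for a.e. z
  have haeP : ∀ᵐ z ∂(volume.restrict B), ∀ w ∈ ball (0:ℂ) (3/4), w ≠ 0 →
      G (w, z) = w^(m+1) * σ₀ (w, z) := by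
    filter_upwards [haeInt, ae_restrict_mem measurableSet_ball] with z hz hzB
    intro w hw hw0
    have htd := slice_tendsto (hzdiff z hzB) hz
    have hrep := cauchy_rep (hzdiff z hzB) htd w hw hw0
    have : G (w, z) = (2*(π:ℝ)*Complex.I : ℂ)⁻¹ •
        (∮ ζ in C(0, 3/4), (ζ - w)⁻¹ • (ζ^(m+1) * σ₀ (ζ, z))) := by
      rw [hcirc_eq w z]
    rw [this, hrep, inv_smul_smul₀ h2πI]
  -- upgrade to all z by continuity and density
  have hdense : ∀ z₀ ∈ B, ∀ w ∈ ball (0:ℂ) (3/4), w ≠ 0 →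
      G (w, z₀) = w^(m+1) * σ₀ (w, z₀) := by
    intro z₀ hz₀ w hw hw0
    set Q : Set (Fin k → ℂ) :=
      {z | z ∈ B ∧ ∀ w ∈ ball (0:ℂ) (3/4), w ≠ 0 → G (w, z) = w^(m+1) * σ₀ (w, z)} with hQ
    have hclosure : z₀ ∈ closure Q := by
      rw [_root_.mem_closure_iff]
      intro o ho hzo
      by_contra hemp
      rw [Set.not_nonempty_iff_eq_empty] at hemp
      obtain ⟨δ, hδpos, hδ⟩ := Metric.isOpen_iff.mp (ho.inter isOpen_ball)
        z₀ ⟨hzo, hz₀⟩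
      have hsub2 : ball z₀ δ ⊆ {z | ¬ (z ∈ B ∧ ∀ w ∈ ball (0:ℂ) (3/4), w ≠ 0 →
          G (w, z) = w^(m+1) * σ₀ (w, z))} := by
        intro z hzball
        intro hPz
        have : z ∈ o ∩ Q := ⟨(hδ hzball).1, hPz⟩
        rw [hemp] at this
        exact this
      have hmeas0 : (volume.restrict B) {z | ¬ (z ∈ B ∧ ∀ w ∈ ball (0:ℂ) (3/4), w ≠ 0 →
          G (w, z) = w^(m+1) * σ₀ (w, z))} = 0 := by
        have := haeP.and (ae_restrict_mem (measurableSet_ball (x := (0 : Fin k → ℂ)) (ε := 1)))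
        rw [ae_iff] at this
        convert this using 2
        ext z
        simp only [Set.mem_setOf_eq, not_and]
        tauto
      have hpos : 0 < (volume.restrict B) (ball z₀ δ) := by
        rw [Measure.restrict_apply measurableSet_ball]
        have hsubB : ball z₀ δ ∩ B = ball z₀ δ :=
          Set.inter_eq_self_of_subset_left (fun x hx => (hδ hx).2)
        rw [hsubB]
        exact measure_ball_pos volume z₀ hδpos
      have := measure_mono hsub2 |>.trans_eq hmeas0
      exact absurd (lt_of_lt_of_le hpos this) (lt_irrefl 0)
    have hne : (𝓝[Q] z₀).NeBot := mem_closure_iff_nhdsWithin_neBot.mp hclosure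
    have hwA : (w, z₀) ∈ S := by
      refine ⟨⟨?_, hw0⟩, hz₀⟩
      rw [mem_ball, Complex.dist_eq, sub_zero] at hw ⊢
      linarith
    have c1 : ContinuousAt (fun z => G (w, z)) z₀ :=
      ContinuousAt.comp (f := fun z : Fin k → ℂ => ((w : ℂ), z))
        (hGdiffAt (w, z₀) hw hz₀).continuousAt
        (Continuous.continuousAt (continuous_const.prodMk continuous_id))
    have c2 : ContinuousAt (fun z => w^(m+1) * σ₀ (w, z)) z₀ := by
      refine continuousAt_const.mul ?_
      exact ContinuousAt.comp (f := fun z : Fin k → ℂ => ((w : ℂ), z))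
        (hσ.differentiableAt (hSopen.mem_nhds hwA)).continuousAt
        (Continuous.continuousAt (continuous_const.prodMk continuous_id))
    have t2 : Tendsto (fun z => w^(m+1) * σ₀ (w, z)) (𝓝[Q] z₀)
        (𝓝 (w^(m+1) * σ₀ (w, z₀))) := c2.continuousWithinAt
    have t1 : Tendsto (fun z => G (w, z)) (𝓝[Q] z₀) (𝓝 (G (w, z₀))) :=
      c1.continuousWithinAt
    have t1' : Tendsto (fun z => G (w, z)) (𝓝[Q] z₀)
        (𝓝 (w^(m+1) * σ₀ (w, z₀))) := by
      refine tendsto_nhdsWithin_congr (fun z hz => ?_) t2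
      exact (hz.2 w hw hw0).symm
    exact tendsto_nhds_unique t1 t1'
  -- define the extension
  refine ⟨fun p => if p.1 = 0 then G p else p.1^(m+1) * σ₀ p, ?_, ?_⟩
  · intro p₀ hp₀
    obtain ⟨hp₀1, hp₀2⟩ := hp₀
    refine DifferentiableAt.differentiableWithinAt ?_
    by_cases hz : p₀.1 = 0
    · have hG0 : DifferentiableAt ℂ G p₀ := by
        refine hGdiffAt p₀ ?_ hp₀2
        rw [mem_ball, Complex.dist_eq, hz, sub_zero, norm_zero]
        norm_num
      refine hG0.congr_of_eventuallyEq ?_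
      have hNopen : IsOpen {p : ℂ × (Fin k → ℂ) | p.1 ∈ ball (0:ℂ) (3/4) ∧ p.2 ∈ B} :=
        (isOpen_ball.preimage continuous_fst).inter (isOpen_ball.preimage continuous_snd)
      have hNmem : p₀ ∈ {p : ℂ × (Fin k → ℂ) | p.1 ∈ ball (0:ℂ) (3/4) ∧ p.2 ∈ B} := by
        refine ⟨?_, hp₀2⟩
        rw [mem_ball, Complex.dist_eq, hz, sub_zero, norm_zero]
        norm_num
      refine eventuallyEq_of_mem (hNopen.mem_nhds hNmem) ?_
      rintro ⟨w, z⟩ ⟨h1, h2⟩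
      by_cases hw0 : w = 0
      · simp only [hw0, if_pos]
      · simp only [if_neg hw0]
        exact (hdense z h2 w h1 hw0).symm
    · have hd : DifferentiableAt ℂ (fun p : ℂ × (Fin k → ℂ) => p.1^(m+1) * σ₀ p) p₀ :=
        (differentiableAt_fst.pow _).mul
          (hσ.differentiableAt (hSopen.mem_nhds ⟨⟨hp₀1, hz⟩, hp₀2⟩))
      refine hd.congr_of_eventuallyEq ?_
      have hUopen : IsOpen {p : ℂ × (Fin k → ℂ) | p.1 ≠ 0} :=
        isOpen_ne_fun continuous_fst continuous_const
      refine eventuallyEq_of_mem (hUopen.mem_nhds hz) ?_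
      intro p hp
      simp only [if_neg hp]
  · intro p h1 h2
    have h10 : p.1 ≠ 0 := h1.2
    simp only [if_neg h10]
end
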